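/- arXiv:1709.02485 — 2 statements merged into one kernel-verified Lean document; each statement's English description precedes it below -/
import Mathlib

section
/- Let k ⊆ l be number fields, let ω₁, …, ω_e be a k-basis of l contained in O_l, and let 𝔐 ⊆ O_l be the full O_k-module they generate. Let O_𝔐 = {α ∈ l : α𝔐 ⊆ 𝔐}, O_𝔐^× = O_𝔐 ∩ O_l^×, and let E_{l/k}(𝔐) = {α ∈ O_𝔐^× : Norm_{l/k}(α) ∈ Tor(O_k^×)}. Then the rank of the group E_{l/k}(𝔐) equals r(l) − r(k), where r(l) and r(k) are the ranks of the unit groups O_l^× and O_k^× respectively. -/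
open NumberField Module

/-- The normalized logarithmic absolute value `log |x|_w` at an infinite place `w`
of a number field `F`, where `|·|_w = ‖·‖_w^{d_w/d}`. -/
noncomputable def infLogAbs (F : Type*) [Field F] [NumberField F]
    (w : InfinitePlace F) (x : F) : ℝ :=
  (w.mult : ℝ) / (finrank ℚ F : ℝ) * Real.log (w x)

/-- The normalized logarithmic absolute value `log |x|_v` at a finite place `v`
of a number field `F`. -/
noncomputable def finLogAbs (F : Type*) [Field F] [NumberField F]
    (v : IsDedekindDomain.HeightOneSpectrum (𝓞 F)) (x : F) : ℝ :=
  if h : (v.valuation (K := F)) x = 0 then 0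
  else ((Multiplicative.toAdd (WithZero.unzero h) : ℤ) : ℝ) / (finrank ℚ F : ℝ) *
    Real.log (Ideal.absNorm v.asIdeal)

/-- The absolute logarithmic Weil height `h(x) = ∑_w log⁺ |x|_w`, the sum running over
all (infinite and finite) places of the number field `F`. -/
noncomputable def weilHeight (F : Type*) [Field F] [NumberField F] (x : F) : ℝ :=
  (∑ w : InfinitePlace F, max 0 (infLogAbs F w x)) +
    ∑ᶠ v : IsDedekindDomain.HeightOneSpectrum (𝓞 F), max 0 (finLogAbs F v x)

/-- The full `O_k`-module `𝔐` generated by elements `ω i` of `l`. -/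
def fullModule (K : Type*) [Field K] [NumberField K] {L : Type*} [Field L]
    [Algebra K L] {e : ℕ} (ω : Fin e → L) : Set L :=
  {x | ∃ ν : Fin e → 𝓞 K, x = ∑ i, algebraMap K L (ν i : K) * ω i}

/-- The coefficient ring `O_𝔐 = {α ∈ l : α𝔐 ⊆ 𝔐}` of a full module `𝔐 ⊆ l`. -/
def coeffRing {L : Type*} [Field L] (M : Set L) : Set L :=
  {α | ∀ x ∈ M, α * x ∈ M}

/-- The unit group `O_𝔐^× = O_𝔐 ∩ O_l^×` of the coefficient ring. -/
def coeffRingUnits {L : Type*} [Field L] [NumberField L] (M : Set L) : Set L :=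
  {α | α ∈ coeffRing M ∧ ∃ u : (𝓞 L)ˣ, ((u : 𝓞 L) : L) = α}

/-- The group `E_{l/k}(𝔐) = {α ∈ O_𝔐^× : Norm_{l/k}(α) ∈ Tor(O_k^×)}` of relative units. -/
def relUnits (K : Type*) [Field K] [NumberField K] (L : Type*) [Field L] [NumberField L]
    [Algebra K L] (M : Set L) : Set L :=
  {α | α ∈ coeffRingUnits M ∧ ∃ n : ℕ, 0 < n ∧ (Algebra.norm K α) ^ n = 1}

/-- A family of elements of `Lˣ` is multiplicatively independent if no nontrivial
integer-power product of them equals `1`. -/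
def MulIndep {L : Type*} [Field L] {r : ℕ} (ε : Fin r → L) : Prop :=
  ∀ m : Fin r → ℤ, (∏ j, ε j ^ m j) = 1 → m = 0

open scoped Classical in
/-- The set of infinite places of `L` lying above an infinite place `v` of `K`. -/
noncomputable def placesAbove (K : Type*) [Field K] (L : Type*) [Field L] [NumberField L]
    [Algebra K L] (v : InfinitePlace K) : Finset (InfinitePlace L) :=
  Finset.univ.filter (fun w => w.comap (algebraMap K L) = v)

/-!
The norm induces a `ℤ`-linear map from `O_l^× / torsion ≅ ℤ^{r(l)}` to `O_k^× / torsion ≅ ℤ^{r(k)}`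
whose kernel consists of the classes of the units of torsion norm. The norm of a unit of `O_k` is
its `[l : k]`-th power, so this map has full rank and its kernel has rank `r(l) - r(k)`; and
multiplicative independence of units is linear independence of their classes. It remains to see
that every unit of torsion norm has a power in `E_{l/k}(𝔐)`: the module `𝔐` contains `N O_l` for
some `N ≠ 0`, and if `u ^ t = 1 + N β` (`t` the order of `u` in `(O_l / N)^×`), then
`u ^ t x = x + N (β x) ∈ 𝔐` for every `x ∈ 𝔐 ⊆ O_l`.
-/

open NumberField.Units

-- needed to find the `ℤ`-module structure on `Additive ((𝓞 F)ˣ ⧸ torsion F)`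
set_option maxSynthPendingDepth 2

section LinearAlgebra

variable {R V W : Type*} [CommRing R] [IsDomain R] [AddCommGroup V] [Module R V]
  [Module.Finite R V] [AddCommGroup W] [Module R W] [Module.Finite R W] [Module.IsTorsionFree R W]

theorem LinearMap.finrank_ker_add_finrank_of_comp_eq_smul (φ : V →ₗ[R] W) (ι : W →ₗ[R] V)
    {d : R} (hd : d ≠ 0) (h : φ ∘ₗ ι = d • LinearMap.id) :
    finrank R (LinearMap.ker φ) + finrank R W = finrank R V := by
  have hι : Function.Injective (φ ∘ₗ ι) := by
    rw [h]
    exact smul_right_injective W hd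
  have hrange : finrank R (LinearMap.range φ) = finrank R W := by
    refine le_antisymm (Submodule.finrank_le _) ?_
    calc finrank R W = finrank R (LinearMap.range (φ ∘ₗ ι)) :=
          (LinearMap.finrank_range_of_inj hι).symm
      _ ≤ finrank R (LinearMap.range φ) :=
          Submodule.finrank_mono (LinearMap.range_comp_le_range _ _)
  rw [← hrange, ← φ.quotKerEquivRange.finrank_eq, add_comm]
  exact (LinearMap.ker φ).finrank_quotient_add_finrank

end LinearAlgebra

theorem LinearIndependent.smul_of_ne_zero {ι R M : Type*} [Ring R] [NoZeroDivisors R]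
    [AddCommGroup M] [Module R M] {v : ι → M} (hv : LinearIndependent R v) {c : ι → R}
    (hc : ∀ i, c i ≠ 0) : LinearIndependent R (fun i => c i • v i) := by
  rw [linearIndependent_iff'] at hv ⊢
  intro s g hg i hi
  simp only [smul_smul] at hg
  exact (mul_eq_zero.mp (hv s _ hg i hi)).resolve_right (hc i)

theorem Ideal.exists_pow_sub_one_mem_of_finite {S : Type*} [CommRing S] (I : Ideal S)
    [Finite (S ⧸ I)] (u : Sˣ) : ∃ t : ℕ, 0 < t ∧ (u : S) ^ t - 1 ∈ I := by
  obtain ⟨t, ht, h⟩ := isOfFinOrder_iff_pow_eq_one.mp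
    (isOfFinOrder_of_finite (Units.map (Ideal.Quotient.mk I : S →* S ⧸ I) u))
  refine ⟨t, ht, ?_⟩
  rw [← Ideal.Quotient.eq_zero_iff_mem, map_sub, map_pow, map_one, sub_eq_zero]
  simpa [Units.ext_iff] using h

theorem exists_pow_mem_coeffRing {L : Type*} [Field L] [NumberField L] (M : AddSubgroup L)
    (hM : ∀ x ∈ M, IsIntegral ℤ x) {N : ℤ} (hN : N ≠ 0) (hNM : ∀ x : 𝓞 L, (N : L) * x ∈ M)
    (u : (𝓞 L)ˣ) : ∃ t : ℕ, 0 < t ∧ ((u ^ t : (𝓞 L)ˣ) : L) ∈ coeffRing (M : Set L) := by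
  let I : Ideal (𝓞 L) := Ideal.span {(N : 𝓞 L)}
  have : Finite (𝓞 L ⧸ I) := I.finiteQuotientOfFreeOfNeBot (by simpa [I] using hN)
  obtain ⟨t, ht, hI⟩ := I.exists_pow_sub_one_mem_of_finite u
  obtain ⟨β, hβ⟩ := Ideal.mem_span_singleton'.mp hI
  refine ⟨t, ht, fun x hx => ?_⟩
  let y : 𝓞 L := ⟨x, hM x hx⟩
  have key : ((u ^ t : (𝓞 L)ˣ) : 𝓞 L) * y = y + N * (β * y) := by
    rw [Units.val_pow_eq_pow_val]
    linear_combination (-y) * hβ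
  have hcoe : ((u ^ t : (𝓞 L)ˣ) : L) * x = x + N * ((β * y : 𝓞 L) : L) := by
    have := congrArg (algebraMap (𝓞 L) L) key
    rwa [map_mul, map_add, map_mul (algebraMap _ _) (N : 𝓞 L), map_intCast] at this
  rw [hcoe]
  exact M.add_mem hx (hNM _)

section FullModule

variable {K L : Type*} [Field K] [NumberField K] [Field L] [Algebra K L] {e : ℕ}

theorem fullModule_eq_span (ω : Fin e → L) :
    fullModule K ω = Submodule.span (𝓞 K) (Set.range ω) := by
  ext x
  rw [SetLike.mem_coe, Submodule.mem_span_range_iff_exists_fun, fullModule, Set.mem_ofPred_eq]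
  simp only [Algebra.smul_def, IsScalarTower.algebraMap_apply (𝓞 K) K L, eq_comm]

theorem isIntegral_of_mem_fullModule {ω : Fin e → L} (hω : ∀ i, IsIntegral ℤ (ω i)) {x : L}
    (hx : x ∈ fullModule K ω) : IsIntegral ℤ x := by
  obtain ⟨ν, rfl⟩ := hx
  exact IsIntegral.sum _ fun i _ =>
    ((ν i).isIntegral_coe.map (algebraMap K L).toIntAlgHom).mul (hω i)

theorem exists_zsmul_mem_fullModule {ι : Type*} [Finite ι] (b : Basis (Fin e) K L) (v : ι → L) :
    ∃ n : ℤ, n ≠ 0 ∧ ∀ j, n • v j ∈ fullModule K b := by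
  classical
  have := Fintype.ofFinite ι
  have : Algebra.IsAlgebraic ℤ K := (IsFractionRing.isAlgebraic_iff' ℤ (𝓞 K) K).mp inferInstance
  obtain ⟨n, hn, hint⟩ := Algebra.IsAlgebraic.exists_integral_multiples ℤ
    (Finset.univ.image fun p : ι × Fin e => b.repr (v p.1) p.2)
  refine ⟨n, hn, fun j => ⟨fun i => ⟨n • b.repr (v j) i, hint _ (by simp)⟩, ?_⟩⟩
  conv_lhs => rw [← b.sum_repr (v j)]
  simp [Finset.mul_sum, Algebra.smul_def, mul_assoc]

variable [NumberField L]

theorem exists_intCast_mul_mem_fullModule (b : Basis (Fin e) K L) :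
    ∃ N : ℤ, N ≠ 0 ∧ ∀ x : 𝓞 L, (N : L) * x ∈ fullModule K b := by
  obtain ⟨N, hN, hmem⟩ := exists_zsmul_mem_fullModule b fun j => (RingOfIntegers.basis L j : L)
  refine ⟨N, hN, fun x => ?_⟩
  rw [fullModule_eq_span] at hmem ⊢
  have hx := congrArg (algebraMap (𝓞 L) L) ((RingOfIntegers.basis L).sum_repr x)
  rw [map_sum] at hx
  rw [RingOfIntegers.coe_eq_algebraMap, ← hx, Finset.mul_sum]
  refine Submodule.sum_mem _ fun j _ => ?_
  rw [map_zsmul, mul_smul_comm, ← zsmul_eq_mul]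
  exact Submodule.smul_of_tower_mem _ _ (hmem j)

theorem exists_pow_mem_coeffRing_fullModule (b : Basis (Fin e) K L)
    (hb : ∀ i, IsIntegral ℤ (b i)) (u : (𝓞 L)ˣ) :
    ∃ t : ℕ, 0 < t ∧ ((u ^ t : (𝓞 L)ˣ) : L) ∈ coeffRing (fullModule K b) := by
  obtain ⟨N, hN, hNM⟩ := exists_intCast_mul_mem_fullModule (K := K) b
  rw [fullModule_eq_span] at hNM ⊢
  refine exists_pow_mem_coeffRing (Submodule.span (𝓞 K) (Set.range b)).toAddSubgroup
    (fun x hx => isIntegral_of_mem_fullModule (K := K) hb ?_) hN (fun x => hNM x) u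
  rwa [fullModule_eq_span]

end FullModule

namespace NumberField.Units

section MulIndep

variable {F : Type*} [Field F]

theorem coe_prod {ι : Type*} (s : Finset ι) (u : ι → (𝓞 F)ˣ) :
    ((∏ i ∈ s, u i : (𝓞 F)ˣ) : F) = ∏ i ∈ s, (u i : F) :=
  map_prod ((Units.coeHom F).comp (Units.map (algebraMap (𝓞 F) F).toMonoidHom)) u s

theorem sum_zsmul_ofMul {ι : Type*} [Fintype ι] (u : ι → (𝓞 F)ˣ) (c : ι → ℤ) :
    ∑ i, c i • Additive.ofMul (u i : (𝓞 F)ˣ ⧸ torsion F) = Additive.ofMul ↑(∏ i, u i ^ c i) := by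
  simp [ofMul_prod, ofMul_zpow, QuotientGroup.mk_prod, QuotientGroup.mk_zpow]

theorem mulIndep_coe_iff_linearIndependent {r : ℕ} (u : Fin r → (𝓞 F)ˣ) :
    MulIndep (fun i => (u i : F)) ↔
      LinearIndependent ℤ (fun i => Additive.ofMul (u i : (𝓞 F)ˣ ⧸ torsion F)) := by
  simp only [Fintype.linearIndependent_iff, sum_zsmul_ofMul, ofMul_eq_zero,
    QuotientGroup.eq_one_iff]
  constructor
  · intro h c hc i
    obtain ⟨T, hT, hpow⟩ := isOfFinOrder_iff_pow_eq_one.mp hc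
    have hcT := h (fun i => c i * T) <| by
      simpa [zpow_mul, coe_prod, coe_zpow, Finset.prod_pow] using
        congrArg (fun v : (𝓞 F)ˣ => (v : F)) hpow
    simpa [hT.ne'] using congrFun hcT i
  · intro h m hm
    have hprod : ∏ i, u i ^ m i = 1 := coe_injective F (by simpa [coe_prod, coe_zpow] using hm)
    exact funext (h m (hprod ▸ one_mem _))

end MulIndep

variable (K L : Type*) [Field K] [Field L] [Algebra K L]

noncomputable def normModTorsion :
    Additive ((𝓞 L)ˣ ⧸ torsion L) →ₗ[ℤ] Additive ((𝓞 K)ˣ ⧸ torsion K) :=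
  (QuotientGroup.map _ _ (Units.map (RingOfIntegers.norm K : 𝓞 L →* 𝓞 K))
    (CommGroup.le_comap_torsion _)).toAdditive.toIntLinearMap

noncomputable def mapModTorsion :
    Additive ((𝓞 K)ˣ ⧸ torsion K) →ₗ[ℤ] Additive ((𝓞 L)ˣ ⧸ torsion L) :=
  (QuotientGroup.map _ _ (Units.map (algebraMap (𝓞 K) (𝓞 L) : 𝓞 K →* 𝓞 L))
    (CommGroup.le_comap_torsion _)).toAdditive.toIntLinearMap

variable {K L} in
theorem normModTorsion_ofMul (u : (𝓞 L)ˣ) :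
    normModTorsion K L (Additive.ofMul ↑u) =
      Additive.ofMul ↑(Units.map (RingOfIntegers.norm K : 𝓞 L →* 𝓞 K) u) :=
  rfl

theorem normModTorsion_comp_mapModTorsion :
    normModTorsion K L ∘ₗ mapModTorsion K L = (finrank K L : ℤ) • LinearMap.id := by
  refine LinearMap.ext fun x => ?_
  induction x using QuotientGroup.induction_on with | H u => ?_
  change Additive.ofMul (QuotientGroup.mk (Units.map (RingOfIntegers.norm K : 𝓞 L →* 𝓞 K)
    (Units.map (algebraMap (𝓞 K) (𝓞 L) : 𝓞 K →* 𝓞 L) u)) : (𝓞 K)ˣ ⧸ torsion K) =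
    (finrank K L : ℤ) • Additive.ofMul (u : (𝓞 K)ˣ ⧸ torsion K)
  rw [← ofMul_zpow, ← QuotientGroup.mk_zpow, zpow_natCast]
  congr 2
  ext
  simp [RingOfIntegers.norm_algebraMap]

variable {K L} in
theorem ofMul_mem_ker_normModTorsion_iff (u : (𝓞 L)ˣ) :
    Additive.ofMul (u : (𝓞 L)ˣ ⧸ torsion L) ∈ LinearMap.ker (normModTorsion K L) ↔
      ∃ n : ℕ, 0 < n ∧ Algebra.norm K (u : L) ^ n = 1 := by
  rw [LinearMap.mem_ker, normModTorsion_ofMul, ofMul_eq_zero, QuotientGroup.eq_one_iff]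
  refine isOfFinOrder_iff_pow_eq_one.trans ?_
  simp [Units.ext_iff, RingOfIntegers.ext_iff]

variable [NumberField K] [NumberField L]

theorem finrank_ker_normModTorsion :
    finrank ℤ (LinearMap.ker (normModTorsion K L)) = rank L - rank K := by
  rw [← finrank_modTorsion, ← finrank_modTorsion,
    ← (normModTorsion K L).finrank_ker_add_finrank_of_comp_eq_smul (mapModTorsion K L)
      (by simp [finrank_pos.ne']) (normModTorsion_comp_mapModTorsion K L),
    Nat.add_sub_cancel]

theorem exists_linearIndependent_mem_ker_normModTorsion :
    ∃ u : Fin (rank L - rank K) → (𝓞 L)ˣ,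
      (∀ j, Additive.ofMul (u j : (𝓞 L)ˣ ⧸ torsion L) ∈ LinearMap.ker (normModTorsion K L)) ∧
        LinearIndependent ℤ (fun j => Additive.ofMul (u j : (𝓞 L)ˣ ⧸ torsion L)) := by
  let B := Module.finBasisOfFinrankEq ℤ _ (finrank_ker_normModTorsion K L)
  have hB : ∀ j, ∃ u : (𝓞 L)ˣ, Additive.ofMul (u : (𝓞 L)ˣ ⧸ torsion L) = B j := fun j =>
    QuotientGroup.mk_surjective (Additive.toMul (B j : Additive ((𝓞 L)ˣ ⧸ torsion L)))
  choose u hu using hB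
  have hu' : (fun j => Additive.ofMul (u j : (𝓞 L)ˣ ⧸ torsion L)) =
      (LinearMap.ker (normModTorsion K L)).subtype ∘ B := funext hu
  refine ⟨u, fun j => ?_, ?_⟩
  · rw [hu j]
    exact (B j).2
  · rw [hu']
    exact B.linearIndependent.map' _ (Submodule.ker_subtype _)

variable {K L} in
theorem coe_mem_relUnits_iff {M : Set L} (u : (𝓞 L)ˣ) :
    (u : L) ∈ relUnits K L M ↔ (u : L) ∈ coeffRing M ∧
      Additive.ofMul (u : (𝓞 L)ˣ ⧸ torsion L) ∈ LinearMap.ker (normModTorsion K L) := by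
  rw [ofMul_mem_ker_normModTorsion_iff]
  exact and_congr_left' (and_iff_left ⟨u, rfl⟩)

end NumberField.Units

theorem rank_relUnits_eq_general
    (K L : Type*) [Field K] [NumberField K] [Field L] [NumberField L] [Algebra K L]
    (e : ℕ) (b : Basis (Fin e) K L)
    (hbInt : ∀ i, IsIntegral ℤ (b i))
    (M : Set L) (hM : M = fullModule K (fun i => b i)) :
    (∃ ε : Fin (Units.rank L - Units.rank K) → L,
        (∀ j, ε j ∈ relUnits K L M) ∧ MulIndep ε) ∧
      ∀ η : Fin (Units.rank L - Units.rank K + 1) → L,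
        (∀ i, η i ∈ relUnits K L M) → ¬ MulIndep η := by
  subst hM
  refine ⟨?_, fun η hη hindep => ?_⟩
  · obtain ⟨u, hker, hli⟩ := exists_linearIndependent_mem_ker_normModTorsion K L
    choose t ht hmem using fun j => exists_pow_mem_coeffRing_fullModule b hbInt (u j)
    have hclass : ∀ j, Additive.ofMul ((u j ^ t j : (𝓞 L)ˣ) : (𝓞 L)ˣ ⧸ torsion L) =
        (t j : ℤ) • Additive.ofMul (u j : (𝓞 L)ˣ ⧸ torsion L) := fun j => by
      rw [QuotientGroup.mk_pow, ofMul_pow, natCast_zsmul]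
    refine ⟨fun j => ((u j ^ t j : (𝓞 L)ˣ) : L), fun j => (coe_mem_relUnits_iff _).mpr
      ⟨hmem j, hclass j ▸ Submodule.smul_mem _ _ (hker j)⟩, ?_⟩
    rw [mulIndep_coe_iff_linearIndependent]
    simp only [hclass]
    exact hli.smul_of_ne_zero fun j => by exact_mod_cast (ht j).ne'
  · choose u hu using fun i => (hη i).1.2
    obtain rfl : η = fun i => (u i : L) := funext fun i => (hu i).symm
    have hker := fun i => ((coe_mem_relUnits_iff (u i)).mp (hη i)).2
    let v : Fin (rank L - rank K + 1) → LinearMap.ker (normModTorsion K L) := fun i => ⟨_, hker i⟩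
    have hv : LinearIndependent ℤ v := LinearIndependent.of_comp (LinearMap.ker _).subtype
      ((mulIndep_coe_iff_linearIndependent u).mp hindep)
    have hcard := hv.fintype_card_le_finrank
    rw [finrank_ker_normModTorsion, Fintype.card_fin] at hcard
    omega

/-- **Lemma 2.1.** Let `𝔐 ⊆ O_l` be the full `O_k`-module generated by a `k`-basis of `l`
consisting of algebraic integers, and let `E_{l/k}(𝔐)` be its group of relative units.
Then the rank of `E_{l/k}(𝔐)` equals `r(l) − r(k)`: there is a multiplicatively
independent family of `r(l) − r(k)` elements of `E_{l/k}(𝔐)`, and every family of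
`r(l) − r(k) + 1` elements of `E_{l/k}(𝔐)` is multiplicatively dependent. -/
theorem rank_relUnits_eq
    (K L : Type*) [Field K] [NumberField K] [Field L] [NumberField L] [Algebra K L]
    (e : ℕ) (he : e = finrank K L) (b : Basis (Fin e) K L)
    (hbInt : ∀ i, IsIntegral ℤ (b i))
    (M : Set L) (hM : M = fullModule K (fun i => b i)) :
    (∃ ε : Fin (Units.rank L - Units.rank K) → L,
        (∀ j, ε j ∈ relUnits K L M) ∧ MulIndep ε) ∧
      ∀ η : Fin (Units.rank L - Units.rank K + 1) → L,
        (∀ i, η i ∈ relUnits K L M) → ¬ MulIndep η :=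
  rank_relUnits_eq_general K L e b hbInt M hM
end

section
/- Let k ⊆ l be number fields, let 𝔐 ⊆ O_l be a full O_k-module generated by a k-basis of l, and let E_{l/k}(𝔐) be its group of relative units, of rank r(l/k) = r(l) − r(k). Let ε₁, …, ε_{r(l/k)} be multiplicatively independent elements of E_{l/k}(𝔐), and let M = (log|ε_j|_w) be the real matrix with rows indexed by the archimedean places w of l and columns indexed by j = 1, …, r(l/k). Then M has rank r(l/k), and the linear map y ↦ My from ℝ^{r(l/k)} to ℝ^{W_∞(l)} maps ℝ^{r(l/k)} onto the subspace D_{r(l/k)} = {ξ ∈ ℝ^{W_∞(l)} : ∑_{w|v} ξ_w = 0 for each archimedean place v of k}. -/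
open NumberField Module

/-- The linear functional `ξ ↦ ∑_{w∣v} ξ_w` on `ℝ^{W_∞(l)}`. -/
noncomputable def sumAbove (K : Type*) [Field K] (L : Type*) [Field L] [NumberField L]
    [Algebra K L] (v : InfinitePlace K) : (InfinitePlace L → ℝ) →ₗ[ℝ] ℝ :=
  ∑ w ∈ placesAbove K L v, LinearMap.proj w

/-- The subspace `D = {ξ ∈ ℝ^{W_∞(l)} : ∑_{w∣v} ξ_w = 0 for each v ∈ W_∞(k)}`. -/
noncomputable def subspaceD (K : Type*) [Field K] (L : Type*) [Field L] [NumberField L]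
    [Algebra K L] : Submodule ℝ (InfinitePlace L → ℝ) :=
  ⨅ v : InfinitePlace K, LinearMap.ker (sumAbove K L v)

/-! The relative product formula `∏_{w ∣ v} ‖α‖_w^{d_w} = ‖N_{l/k} α‖_v^{d_v}` puts every column
of `M` in `D`, because `N_{l/k} ε_j` is a root of unity. Up to the factor `[l : ℚ]` and the
omission of one place, the columns are the images of the `ε_j` under the logarithmic embedding;
they are `ℤ`-independent there, and in the discrete unit lattice `ℤ`-rank equals `ℝ`-rank, so
the columns are `ℝ`-independent. As `dim D = #W_∞(l) - #W_∞(k) = r(l/k)`, they span `D`. -/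

open NumberField.InfinitePlace NumberField.Units NumberField.Units.dirichletUnitTheorem

theorem linearIndependent_real_of_int_of_discrete {E : Type*} [NormedAddCommGroup E]
    [NormedSpace ℝ E] [FiniteDimensional ℝ E] {ι : Type*} [Fintype ι] {v : ι → E}
    (hd : DiscreteTopology (Submodule.span ℤ (Set.range v))) (hv : LinearIndependent ℤ v) :
    LinearIndependent ℝ v := by
  rw [linearIndependent_iff_card_eq_finrank_span, Real.finrank_eq_int_finrank_of_discrete hd]
  exact (finrank_span_eq_card hv).symm

theorem MulIndep.eq_zero_of_prod_zpow_mem_torsion {L : Type*} [Field L] {r : ℕ}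
    {u : Fin r → (𝓞 L)ˣ} (hu : MulIndep (fun j ↦ (u j : L))) (m : Fin r → ℤ)
    (hm : ∏ j, u j ^ m j ∈ torsion L) : m = 0 := by
  obtain ⟨n, hn, hpow⟩ := isOfFinOrder_iff_pow_eq_one.mp ((CommGroup.mem_torsion _).mp hm)
  have hunits : ∏ j, u j ^ ((n : ℤ) • m) j = 1 := by
    simpa [mul_comm, zpow_mul, Finset.prod_pow] using hpow
  have hnm : (n : ℤ) • m = 0 := by
    refine hu _ ?_
    have := congrArg (fun x : (𝓞 L)ˣ ↦ (x : L)) hunits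
    simpa [Units.coe_prod, coe_zpow, map_prod] using this
  exact (smul_right_injective _ (by exact_mod_cast hn.ne')).eq_iff.mp (by simpa using hnm)

section Units

open scoped Classical

variable {L : Type*} [Field L] [NumberField L]

theorem linearIndependent_logEmbedding {ι : Type*} [Fintype ι] {u : ι → (𝓞 L)ˣ}
    (hu : ∀ m : ι → ℤ, ∏ j, u j ^ m j ∈ torsion L → m = 0) :
    LinearIndependent ℝ (fun j ↦ logEmbedding L (Additive.ofMul (u j))) := by
  refine linearIndependent_real_of_int_of_discrete ?_ ?_
  · rw [← SetLike.isDiscrete_iff_discreteTopology]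
    refine (inferInstance : DiscreteTopology (unitLattice L)).isDiscrete.mono ?_
    rw [SetLike.coe_subset_coe, Submodule.span_le]
    rintro _ ⟨j, rfl⟩
    exact ⟨Additive.ofMul (u j), Submodule.mem_top, rfl⟩
  · rw [Fintype.linearIndependent_iff]
    intro m hm
    refine congrFun (hu m ?_)
    rw [← logEmbedding_eq_zero_iff, ofMul_prod, map_sum, ← hm]
    refine Finset.sum_congr rfl fun j _ ↦ ?_
    rw [ofMul_zpow, map_zsmul]

end Units

section PlacesAbove

open Finset
open scoped Classical

variable {K L : Type*} [Field K] [NumberField K] [Field L] [NumberField L] [Algebra K L]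

theorem prod_liesOver_norm_apply (σ : K →+* ℂ) (x : L) :
    ∏ φ : L →+* ℂ with φ.comp (algebraMap K L) = σ, ‖φ x‖ = ‖σ (Algebra.norm K x)‖ := by
  have : FiniteDimensional K L := Module.Finite.of_restrictScalars_finite ℚ K L
  let : Algebra K ℂ := σ.toAlgebra
  let e : (L →ₐ[K] ℂ) ≃ {φ : L →+* ℂ // φ.comp (algebraMap K L) = σ} :=
    { toFun := fun τ ↦ ⟨τ.toRingHom, RingHom.ext τ.commutes⟩
      invFun := fun φ ↦ { toRingHom := φ.1, commutes' := RingHom.congr_fun φ.2 }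
      left_inv := fun _ ↦ rfl
      right_inv := fun _ ↦ rfl }
  rw [show σ = algebraMap K ℂ from rfl, Algebra.norm_eq_prod_embeddings K ℂ, norm_prod,
    Finset.prod_subtype _ fun _ ↦ by rw [mem_filter, and_iff_right (mem_univ _)]]
  exact (Fintype.prod_equiv e _ _ fun _ ↦ rfl).symm

theorem prod_norm_mk_eq_pow_mult {F : Type*} [Field F] [NumberField F] (w : InfinitePlace F)
    (x : F) : ∏ φ : F →+* ℂ with InfinitePlace.mk φ = w, ‖φ x‖ = w x ^ w.mult := by
  have h (φ) (hφ : φ ∈ ({φ | InfinitePlace.mk φ = w} : Finset _)) : ‖φ x‖ = w x := by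
    rw [← (mem_filter.mp hφ).2, InfinitePlace.apply]
  rw [prod_congr rfl h, prod_const, InfinitePlace.card_filter_mk_eq]

theorem prod_placesAbove_pow_mult (v : InfinitePlace K) (x : L) :
    ∏ w ∈ placesAbove K L v, w x ^ w.mult = v (Algebra.norm K x) ^ v.mult := by
  calc ∏ w ∈ placesAbove K L v, w x ^ w.mult
      = ∏ w ∈ placesAbove K L v, ∏ φ : L →+* ℂ with InfinitePlace.mk φ = w, ‖φ x‖ := by
        simp_rw [prod_norm_mk_eq_pow_mult]
    _ = ∏ φ : L →+* ℂ with InfinitePlace.mk φ ∈ placesAbove K L v, ‖φ x‖ :=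
        prod_fiberwise_eq_prod_filter _ _ _ _
    _ = ∏ φ : L →+* ℂ with φ.comp (algebraMap K L) ∈
          ({σ | InfinitePlace.mk σ = v} : Finset _), ‖φ x‖ := by
        congr 1
        ext φ
        simp [placesAbove, InfinitePlace.comap_mk]
    _ = ∏ σ : K →+* ℂ with InfinitePlace.mk σ = v,
          ∏ φ : L →+* ℂ with φ.comp (algebraMap K L) = σ, ‖φ x‖ :=
        (prod_fiberwise_eq_prod_filter _ _ _ _).symm
    _ = v (Algebra.norm K x) ^ v.mult := by
        simp_rw [prod_liesOver_norm_apply, prod_norm_mk_eq_pow_mult]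

end PlacesAbove

section SubspaceD

open Finset
open scoped Classical

variable {K L : Type*} [Field K] [NumberField K] [Field L] [NumberField L] [Algebra K L]

theorem sum_placesAbove_infLogAbs (v : InfinitePlace K) {x : L} (hx : x ≠ 0) :
    ∑ w ∈ placesAbove K L v, infLogAbs L w x =
      v.mult / finrank ℚ L * Real.log (v (Algebra.norm K x)) := by
  have h := congrArg Real.log (prod_placesAbove_pow_mult v x)
  rw [Real.log_prod fun w _ ↦ pow_ne_zero _ ((map_ne_zero w).mpr hx)] at h
  simp_rw [Real.log_pow] at h
  simp only [infLogAbs, div_mul_eq_mul_div, ← sum_div, h]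

theorem infLogAbs_mem_subspaceD {α : L} (hα : α ≠ 0) {n : ℕ} (hn : n ≠ 0)
    (hN : Algebra.norm K α ^ n = 1) : (fun w ↦ infLogAbs L w α) ∈ subspaceD K L := by
  simp only [subspaceD, Submodule.mem_iInf, LinearMap.mem_ker]
  intro v
  have hv : v (Algebra.norm K α) = 1 :=
    (pow_eq_one_iff_of_nonneg (apply_nonneg v _) hn).mp (by rw [← map_pow, hN, map_one])
  simpa [sumAbove, hv] using sum_placesAbove_infLogAbs v hα

theorem surjective_pi_sumAbove : Function.Surjective (LinearMap.pi (sumAbove K L)) := by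
  have : FiniteDimensional K L := Module.Finite.of_restrictScalars_finite ℚ K L
  have : Algebra.IsAlgebraic K L := Algebra.IsAlgebraic.of_finite K L
  choose s hs using InfinitePlace.comap_surjective (k := K) (K := L)
  intro t
  refine ⟨fun w ↦ if w = s (w.comap (algebraMap K L)) then t (w.comap (algebraMap K L)) else 0,
    ?_⟩
  funext v
  have hcomap (w) (hw : w ∈ placesAbove K L v) : w.comap (algebraMap K L) = v :=
    (mem_filter.mp hw).2
  simp only [LinearMap.pi_apply, sumAbove, LinearMap.sum_apply, LinearMap.proj_apply]
  rw [sum_congr rfl fun w hw ↦ by rw [hcomap w hw], sum_ite_eq',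
    if_pos (show s v ∈ placesAbove K L v from mem_filter.mpr ⟨mem_univ _, hs v⟩)]

theorem finrank_subspaceD : finrank ℝ (subspaceD K L) = Units.rank L - Units.rank K := by
  have hker : LinearMap.ker (LinearMap.pi (sumAbove K L)) = subspaceD K L := LinearMap.ker_pi _
  have h := LinearMap.finrank_range_add_finrank_ker (LinearMap.pi (sumAbove K L))
  rw [LinearMap.range_eq_top.mpr surjective_pi_sumAbove, finrank_top, hker,
    finrank_fintype_fun_eq_card, finrank_fintype_fun_eq_card] at h
  have : 0 < Fintype.card (InfinitePlace K) := Fintype.card_pos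
  unfold Units.rank
  omega

end SubspaceD

theorem Matrix.range_mulVecLin_eq_of_linearIndependent_col {R m n : Type*} [Field R] [Fintype m]
    [Fintype n] {A : Matrix m n R} {D : Submodule R (m → R)} (hA : LinearIndependent R A.col)
    (hAD : ∀ j, A.col j ∈ D) (hD : finrank R D = Fintype.card n) :
    LinearMap.range A.mulVecLin = D := by
  rw [Matrix.range_mulVecLin]
  refine Submodule.eq_of_le_of_finrank_le (Submodule.span_le.mpr ?_) ?_
  · rintro _ ⟨j, rfl⟩
    exact hAD j
  · rw [hD, finrank_span_eq_card hA]

section LogMatrix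

variable {L : Type*} [Field L] [NumberField L]

open scoped Classical in
theorem logEmbedding_eq_finrank_mul_infLogAbs (u : (𝓞 L)ˣ) :
    logEmbedding L (Additive.ofMul u) = fun w ↦ (finrank ℚ L : ℝ) * infLogAbs L w.1 u := by
  have : (finrank ℚ L : ℝ) ≠ 0 := Nat.cast_ne_zero.mpr finrank_pos.ne'
  funext w
  rw [logEmbedding_component, infLogAbs]
  field_simp

theorem linearIndependent_infLogAbs {r : ℕ} {ε : Fin r → L}
    (hε : ∀ j, ∃ u : (𝓞 L)ˣ, (u : L) = ε j) (hind : MulIndep ε) :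
    LinearIndependent ℝ (fun j w ↦ infLogAbs L w (ε j)) := by
  classical
  choose u hu using hε
  obtain rfl : ε = fun j ↦ (u j : L) := funext fun j ↦ (hu j).symm
  let restrict : (InfinitePlace L → ℝ) →ₗ[ℝ] logSpace L :=
    (finrank ℚ L : ℝ) • LinearMap.funLeft ℝ ℝ Subtype.val
  refine LinearIndependent.of_comp restrict ?_
  convert linearIndependent_logEmbedding hind.eq_zero_of_prod_zpow_mem_torsion with j
  exact (logEmbedding_eq_finrank_mul_infLogAbs (u j)).symm

end LogMatrix

theorem logMatrix_rank_and_range_general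
    (K L : Type*) [Field K] [NumberField K] [Field L] [NumberField L] [Algebra K L]
    (M : Set L)
    (ε : Fin (Units.rank L - Units.rank K) → L)
    (hε : ∀ j, ε j ∈ relUnits K L M) (hind : MulIndep ε)
    (Mmat : Matrix (InfinitePlace L) (Fin (Units.rank L - Units.rank K)) ℝ)
    (hMmat : Mmat = fun w j => infLogAbs L w (ε j)) :
    Mmat.rank = Units.rank L - Units.rank K ∧
      LinearMap.range Mmat.mulVecLin = subspaceD K L := by
  have hcols : LinearIndependent ℝ Mmat.col :=
    hMmat ▸ linearIndependent_infLogAbs (fun j ↦ (hε j).1.2) hind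
  have hcols_mem (j) : Mmat.col j ∈ subspaceD K L := by
    obtain ⟨⟨-, u, hu⟩, n, hn, hN⟩ := hε j
    exact hMmat ▸ infLogAbs_mem_subspaceD (hu ▸ coe_ne_zero u) hn.ne' hN
  refine ⟨?_, Mmat.range_mulVecLin_eq_of_linearIndependent_col hcols hcols_mem ?_⟩
  · rw [← Matrix.rank_transpose]
    exact hcols.rank_matrix.trans (Fintype.card_fin _)
  · rw [finrank_subspaceD, Fintype.card_fin]

/-- **(3.10)–(3.12).** Let `ε₁, …, ε_{r(l/k)}` (with `r(l/k) = r(l) − r(k)`) be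
multiplicatively independent relative units in `E_{l/k}(𝔐)`, and let
`M = (log|ε_j|_w)` be the matrix indexed by archimedean places `w` of `l` and
`j = 1, …, r(l/k)`.  Then `M` has rank `r(l/k)`, and `y ↦ My` maps `ℝ^{r(l/k)}` onto the
subspace `D_{r(l/k)}`. -/
theorem logMatrix_rank_and_range
    (K L : Type*) [Field K] [NumberField K] [Field L] [NumberField L] [Algebra K L]
    (e : ℕ) (he : e = finrank K L) (b : Basis (Fin e) K L)
    (hbInt : ∀ i, IsIntegral ℤ (b i))
    (M : Set L) (hM : M = fullModule K (fun i => b i))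
    (ε : Fin (Units.rank L - Units.rank K) → L)
    (hε : ∀ j, ε j ∈ relUnits K L M) (hind : MulIndep ε)
    (Mmat : Matrix (InfinitePlace L) (Fin (Units.rank L - Units.rank K)) ℝ)
    (hMmat : Mmat = fun w j => infLogAbs L w (ε j)) :
    Mmat.rank = Units.rank L - Units.rank K ∧
      LinearMap.range Mmat.mulVecLin = subspaceD K L :=
  logMatrix_rank_and_range_general K L M ε hε hind Mmat hMmat
end
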